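/- The pseudohyperbolic metric on the unit ball satisfies the strengthened triangle inequality: for z₁, z₂, w ∈ B_n, | |φ_{z₁}(w)| - |φ_{z₂}(w)| | ≤ ρ(z₁,z₂) · (1 - |φ_{z₁}(w)||φ_{z₂}(w)|). -/

import Mathlib

open MeasureTheory Metric Complex Filter

noncomputable section

/-- `ℂⁿ` as a Hilbert space. -/
abbrev Cn (n : ℕ) := EuclideanSpace ℂ (Fin n)

/-- The Hermitian inner product `⟨z,w⟩ = Σ zᵢ conj(wᵢ)` (as in the paper). -/
def herm {n : ℕ} (z w : Cn n) : ℂ := inner ℂ w z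

/- The involutive Möbius automorphism `φ_z` of the unit ball with `φ_z(0) = z`,
given by the standard explicit formula `φ_z(w) = (z - P_z w - s_z Q_z w)/(1 - ⟨w,z⟩)`. -/
open Classical in
def mobius {n : ℕ} (z w : Cn n) : Cn n :=
  if z = 0 then -w else
    (1 - herm w z)⁻¹ •
      ((z - (herm w z / herm z z) • z) -
        (Real.sqrt (1 - ‖z‖ ^ 2) : ℂ) • (w - (herm w z / herm z z) • z))

/-- The pseudohyperbolic metric `ρ(z,w) = |φ_z(w)|`. -/
def prho {n : ℕ} (z w : Cn n) : ℝ := ‖mobius z w‖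

/-- The hyperbolic (Bergman) metric `β(z,w) = (1/2) log((1+ρ)/(1-ρ))`. -/
def hbeta {n : ℕ} (z w : Cn n) : ℝ :=
  (1 / 2) * Real.log ((1 + prho z w) / (1 - prho z w))

/-!
The identity `(1 - ⟨φ_a z, φ_a w⟩)(1 - ⟨z, a⟩)(1 - ⟨a, w⟩) = (1 - |a|²)(1 - ⟨z, w⟩)` gives
`1 - ρ(z, w)² = (1 - |z|²)(1 - |w|²) / |1 - ⟨z, w⟩|²`. Applied with `a = w`, and with
`|1 - ⟨φ_w z₁, φ_w z₂⟩| ≥ 1 - ρ₁ρ₂` by Cauchy–Schwarz, where `ρᵢ = |φ_{zᵢ}(w)| = |φ_w(zᵢ)|`,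
it yields `(1 - ρ(z₁, z₂)²)(1 - ρ₁ρ₂)² ≤ (1 - ρ₁²)(1 - ρ₂²)`. Since
`(1 - ρ₁ρ₂)² - (ρ₁ - ρ₂)² = (1 - ρ₁²)(1 - ρ₂²)`, this is the square of the claim.
-/

lemma abs_sub_le_mul_one_sub_mul {a b c : ℝ} (hc : 0 ≤ c) (hab : 0 ≤ 1 - a * b)
    (h : (1 - c ^ 2) * (1 - a * b) ^ 2 ≤ (1 - a ^ 2) * (1 - b ^ 2)) :
    |a - b| ≤ c * (1 - a * b) := by
  refine abs_le_of_sq_le_sq ?_ (by positivity)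
  linarith

section

variable {n : ℕ}

lemma herm_comm (z w : Cn n) : herm z w = starRingEnd ℂ (herm w z) := by
  rw [herm, herm, inner_conj_symm]

lemma herm_self (z : Cn n) : herm z z = ((‖z‖ ^ 2 : ℝ) : ℂ) := by
  simp [herm, inner_self_eq_norm_sq_to_K]

lemma norm_herm_le (z w : Cn n) : ‖herm z w‖ ≤ ‖z‖ * ‖w‖ := by
  simpa [herm, mul_comm] using norm_inner_le_norm (𝕜 := ℂ) w z

lemma one_sub_herm_comm (z w : Cn n) :
    1 - herm z w = starRingEnd ℂ (1 - herm w z) := by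
  rw [map_sub, map_one, herm_comm]

lemma norm_one_sub_herm_comm (z w : Cn n) : ‖1 - herm z w‖ = ‖1 - herm w z‖ := by
  rw [one_sub_herm_comm, Complex.norm_conj]

lemma one_sub_herm_mul_one_sub_herm (z w : Cn n) :
    (1 - herm z w) * (1 - herm w z) = ((‖1 - herm z w‖ ^ 2 : ℝ) : ℂ) := by
  rw [one_sub_herm_comm w z, Complex.mul_conj, Complex.normSq_eq_norm_sq]

lemma one_sub_norm_mul_norm_le (z w : Cn n) : 1 - ‖z‖ * ‖w‖ ≤ ‖1 - herm z w‖ := by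
  have := norm_sub_norm_le (1 : ℂ) (herm z w)
  rw [norm_one] at this
  linarith [norm_herm_le z w]

lemma one_sub_herm_ne_zero {z w : Cn n} (hz : ‖z‖ < 1) (hw : ‖w‖ ≤ 1) :
    1 - herm z w ≠ 0 := by
  rw [← norm_pos_iff]
  have : ‖z‖ * ‖w‖ < 1 := by nlinarith [norm_nonneg z]
  linarith [one_sub_norm_mul_norm_le z w]

lemma herm_mobius_mobius {a : Cn n} (ha : ‖a‖ ≤ 1) (z w : Cn n) :
    herm (mobius a z) (mobius a w) =
      (‖a‖ ^ 2 - herm z a - herm a w + herm z a * herm a w + (1 - ‖a‖ ^ 2) * herm z w) /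
        ((1 - herm z a) * (1 - herm a w)) := by
  rcases eq_or_ne a 0 with rfl | ha0
  · simp [mobius, herm]
  have hA : (‖a‖ : ℂ) ^ 2 ≠ 0 := by simpa using ha0
  have hS : ((Real.sqrt (1 - ‖a‖ ^ 2) : ℝ) : ℂ) ^ 2 = 1 - (‖a‖ : ℂ) ^ 2 := by
    rw [← Complex.ofReal_pow, Real.sq_sqrt (by nlinarith [norm_nonneg a])]
    push_cast; ring
  simp only [mobius, if_neg ha0, herm, inner_sub_left, inner_sub_right, inner_smul_left,
    inner_smul_right, map_div₀, map_sub, map_inv₀, map_one, Complex.conj_ofReal,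
    inner_conj_symm, inner_self_eq_norm_sq_to_K, map_pow, RCLike.conj_ofReal]
  generalize inner ℂ a z = p, inner ℂ w a = u, inner ℂ w z = r,
    ((Real.sqrt (1 - ‖a‖ ^ 2) : ℝ) : ℂ) = S at hS ⊢
  rw [div_eq_mul_inv _ ((1 - p) * (1 - u)), mul_inv]
  generalize (1 - p)⁻¹ = P, (1 - u)⁻¹ = U, (‖a‖ : ℂ) ^ 2 = A at hA hS ⊢
  field_simp
  linear_combination P * U * (A * r - p * u) * hS

lemma one_sub_herm_mobius_mobius_mul {a z w : Cn n} (ha : ‖a‖ ≤ 1) (hz : ‖z‖ < 1)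
    (hw : ‖w‖ < 1) :
    (1 - herm (mobius a z) (mobius a w)) * ((1 - herm z a) * (1 - herm a w)) =
      ((1 - ‖a‖ ^ 2 : ℝ) : ℂ) * (1 - herm z w) := by
  have hza : 1 - herm z a ≠ 0 := one_sub_herm_ne_zero hz ha
  have haw : 1 - herm a w ≠ 0 := by
    rw [one_sub_herm_comm, map_ne_zero]
    exact one_sub_herm_ne_zero hw ha
  rw [herm_mobius_mobius ha]
  field_simp
  push_cast
  ring

lemma one_sub_prho_sq {z w : Cn n} (hz : ‖z‖ < 1) (hw : ‖w‖ < 1) :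
    1 - prho z w ^ 2 = (1 - ‖z‖ ^ 2) * (1 - ‖w‖ ^ 2) / ‖1 - herm w z‖ ^ 2 := by
  have hN : ‖1 - herm w z‖ ≠ 0 := norm_ne_zero_iff.mpr (one_sub_herm_ne_zero hw hz.le)
  have h := one_sub_herm_mobius_mobius_mul hz.le hw hw
  rw [herm_self, herm_self, one_sub_herm_mul_one_sub_herm] at h
  rw [eq_div_iff (pow_ne_zero 2 hN), prho]
  exact_mod_cast h

lemma one_sub_prho_sq_pos {z w : Cn n} (hz : ‖z‖ < 1) (hw : ‖w‖ < 1) :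
    0 < 1 - prho z w ^ 2 := by
  have hN : 0 < ‖1 - herm w z‖ := norm_pos_iff.mpr (one_sub_herm_ne_zero hw hz.le)
  rw [one_sub_prho_sq hz hw]
  have : ‖z‖ ^ 2 < 1 := by nlinarith [norm_nonneg z]
  have : ‖w‖ ^ 2 < 1 := by nlinarith [norm_nonneg w]
  positivity

lemma prho_lt_one {z w : Cn n} (hz : ‖z‖ < 1) (hw : ‖w‖ < 1) : prho z w < 1 := by
  have := one_sub_prho_sq_pos hz hw
  nlinarith [norm_nonneg (mobius z w)]

lemma prho_mul_prho_lt_one {z₁ w₁ z₂ w₂ : Cn n} (hz₁ : ‖z₁‖ < 1) (hw₁ : ‖w₁‖ < 1)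
    (hz₂ : ‖z₂‖ < 1) (hw₂ : ‖w₂‖ < 1) : prho z₁ w₁ * prho z₂ w₂ < 1 :=
  mul_lt_one_of_nonneg_of_lt_one_left (norm_nonneg _) (prho_lt_one hz₁ hw₁)
    (prho_lt_one hz₂ hw₂).le

lemma prho_comm {z w : Cn n} (hz : ‖z‖ < 1) (hw : ‖w‖ < 1) : prho z w = prho w z := by
  have h := one_sub_prho_sq hz hw
  rw [norm_one_sub_herm_comm, mul_comm, ← one_sub_prho_sq hw hz] at h
  rw [prho, prho] at h ⊢
  exact (pow_left_inj₀ (norm_nonneg _) (norm_nonneg _) two_ne_zero).mp (by linarith)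

lemma one_sub_prho_mul_prho_mul_le {z₁ z₂ w : Cn n} (hz₁ : ‖z₁‖ < 1) (hz₂ : ‖z₂‖ < 1)
    (hw : ‖w‖ < 1) :
    (1 - prho z₁ w * prho z₂ w) * (‖1 - herm w z₁‖ * ‖1 - herm w z₂‖) ≤
      (1 - ‖w‖ ^ 2) * ‖1 - herm z₂ z₁‖ := by
  have hE : 0 ≤ 1 - ‖w‖ ^ 2 := by nlinarith [norm_nonneg w]
  have hlow : 1 - prho z₁ w * prho z₂ w ≤ ‖1 - herm (mobius w z₁) (mobius w z₂)‖ := by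
    rw [prho_comm hz₁ hw, prho_comm hz₂ hw]
    exact one_sub_norm_mul_norm_le _ _
  calc (1 - prho z₁ w * prho z₂ w) * (‖1 - herm w z₁‖ * ‖1 - herm w z₂‖)
      ≤ ‖1 - herm (mobius w z₁) (mobius w z₂)‖ * (‖1 - herm z₁ w‖ * ‖1 - herm w z₂‖) := by
        rw [norm_one_sub_herm_comm z₁ w]
        gcongr
    _ = ‖((1 - ‖w‖ ^ 2 : ℝ) : ℂ) * (1 - herm z₁ z₂)‖ := by
        rw [← one_sub_herm_mobius_mobius_mul hw.le hz₁ hz₂, norm_mul, norm_mul]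
    _ = (1 - ‖w‖ ^ 2) * ‖1 - herm z₂ z₁‖ := by
        rw [norm_mul, Complex.norm_real, Real.norm_of_nonneg hE, norm_one_sub_herm_comm]

lemma one_sub_prho_sq_mul_sq_le {z₁ z₂ w : Cn n} (hz₁ : ‖z₁‖ < 1) (hz₂ : ‖z₂‖ < 1)
    (hw : ‖w‖ < 1) :
    (1 - prho z₁ z₂ ^ 2) * (1 - prho z₁ w * prho z₂ w) ^ 2 ≤
      (1 - prho z₁ w ^ 2) * (1 - prho z₂ w ^ 2) := by
  have hN₀ : 0 < ‖1 - herm z₂ z₁‖ := norm_pos_iff.mpr (one_sub_herm_ne_zero hz₂ hz₁.le)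
  have hN₁ : 0 < ‖1 - herm w z₁‖ := norm_pos_iff.mpr (one_sub_herm_ne_zero hw hz₁.le)
  have hN₂ : 0 < ‖1 - herm w z₂‖ := norm_pos_iff.mpr (one_sub_herm_ne_zero hw hz₂.le)
  have hD₁ : 0 ≤ 1 - ‖z₁‖ ^ 2 := by nlinarith [norm_nonneg z₁]
  have hD₂ : 0 ≤ 1 - ‖z₂‖ ^ 2 := by nlinarith [norm_nonneg z₂]
  have hρ : 0 ≤ 1 - prho z₁ w * prho z₂ w := sub_nonneg.mpr (prho_mul_prho_lt_one hz₁ hw hz₂ hw).le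
  have key := (le_div_iff₀ (by positivity)).mpr (one_sub_prho_mul_prho_mul_le hz₁ hz₂ hw)
  rw [one_sub_prho_sq hz₁ hz₂, one_sub_prho_sq hz₁ hw, one_sub_prho_sq hz₂ hw]
  calc (1 - ‖z₁‖ ^ 2) * (1 - ‖z₂‖ ^ 2) / ‖1 - herm z₂ z₁‖ ^ 2 * (1 - prho z₁ w * prho z₂ w) ^ 2
      ≤ (1 - ‖z₁‖ ^ 2) * (1 - ‖z₂‖ ^ 2) / ‖1 - herm z₂ z₁‖ ^ 2 *
          ((1 - ‖w‖ ^ 2) * ‖1 - herm z₂ z₁‖ / (‖1 - herm w z₁‖ * ‖1 - herm w z₂‖)) ^ 2 := by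
        gcongr
    _ = _ := by field_simp

end

/-- Strengthened triangle inequality for the pseudohyperbolic
metric: `||φ_{z₁}(w)| - |φ_{z₂}(w)|| ≤ ρ(z₁,z₂)(1 - |φ_{z₁}(w)||φ_{z₂}(w)|)`. -/
theorem prho_strong_triangle {n : ℕ} (z₁ z₂ w : Cn n)
    (hz₁ : z₁ ∈ ball (0 : Cn n) 1) (hz₂ : z₂ ∈ ball (0 : Cn n) 1)
    (hw : w ∈ ball (0 : Cn n) 1) :
    |‖mobius z₁ w‖ - ‖mobius z₂ w‖| ≤
      prho z₁ z₂ * (1 - ‖mobius z₁ w‖ * ‖mobius z₂ w‖) := by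
  rw [mem_ball_zero_iff] at hz₁ hz₂ hw
  exact abs_sub_le_mul_one_sub_mul (norm_nonneg _)
    (sub_nonneg.mpr (prho_mul_prho_lt_one hz₁ hw hz₂ hw).le)
    (one_sub_prho_sq_mul_sq_le hz₁ hz₂ hw)
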